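/- The homomorphic rewrite system on the message algebra is convergent: every message m has exactly one normal form m↓, i.e., there is a unique message m↓ with m →* m↓ such that no rewrite step applies to m↓; moreover any two messages reachable from m by →* can be further rewritten to this common normal form. -/

import Mathlib

/-- Messages: the free term algebra generated by atoms under pairing and
encryption with atomic keys. -/
inductive Msg (A : Type) : Type
  | atom : A → Msg A
  | pair : Msg A → Msg A → Msg A
  | enc : Msg A → A → Msg A

/-- The homomorphic rewrite relation: smallest relation containing every
instance of `{m·m'}_k → {m}_k·{m'}_k` and closed under contexts. -/
inductive Rw {A : Type} : Msg A → Msg A → Prop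
  | homo (m m' : Msg A) (k : A) :
      Rw (.enc (.pair m m') k) (.pair (.enc m k) (.enc m' k))
  | pairL {m m' : Msg A} (n : Msg A) : Rw m m' → Rw (.pair m n) (.pair m' n)
  | pairR {m m' : Msg A} (n : Msg A) : Rw m m' → Rw (.pair n m) (.pair n m')
  | enc {m m' : Msg A} (k : A) : Rw m m' → Rw (.enc m k) (.enc m' k)

/-- A message is a normal form if no rewrite step applies to it. -/
def IsNormalForm {A : Type} (m : Msg A) : Prop := ∀ m' : Msg A, ¬ Rw m m'

/-!
The normal form is computed by `Msg.normalForm`, which pushes every encryption down to the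
non-pair messages below it. Each rewrite step preserves `normalForm`, every message rewrites to
its `normalForm`, and `normalForm` fixes normal forms. Hence all reducts of `m` share the normal
form `normalForm m` and still reach it, and it is the only normal form reachable from `m`.
-/

open Relation

namespace Msg

variable {A : Type}

def pushEnc : Msg A → A → Msg A
  | .pair a b, k => .pair (pushEnc a k) (pushEnc b k)
  | m, k => .enc m k

def normalForm : Msg A → Msg A
  | .atom a => .atom a
  | .pair a b => .pair (normalForm a) (normalForm b)
  | .enc m k => pushEnc (normalForm m) k

theorem reflTransGen_pair_left {m m' : Msg A} (n : Msg A) (h : ReflTransGen Rw m m') :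
    ReflTransGen Rw (.pair m n) (.pair m' n) :=
  ReflTransGen.lift (pair · n) (fun _ _ => Rw.pairL n) _ _ h

theorem reflTransGen_pair_right {m m' : Msg A} (n : Msg A) (h : ReflTransGen Rw m m') :
    ReflTransGen Rw (.pair n m) (.pair n m') :=
  ReflTransGen.lift (pair n) (fun _ _ => Rw.pairR n) _ _ h

theorem reflTransGen_pair {a a' b b' : Msg A} (ha : ReflTransGen Rw a a')
    (hb : ReflTransGen Rw b b') : ReflTransGen Rw (.pair a b) (.pair a' b') :=
  (reflTransGen_pair_left b ha).trans (reflTransGen_pair_right a' hb)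

theorem reflTransGen_enc {m m' : Msg A} (k : A) (h : ReflTransGen Rw m m') :
    ReflTransGen Rw (.enc m k) (.enc m' k) :=
  ReflTransGen.lift (enc · k) (fun _ _ => Rw.enc k) _ _ h

theorem reflTransGen_pushEnc (m : Msg A) (k : A) : ReflTransGen Rw (.enc m k) (pushEnc m k) := by
  induction m with
  | pair a b iha ihb => exact .head (Rw.homo a b k) (reflTransGen_pair iha ihb)
  | atom | enc => exact .refl

theorem reflTransGen_normalForm (m : Msg A) : ReflTransGen Rw m (normalForm m) := by
  induction m with
  | atom => exact .refl
  | pair a b iha ihb => exact reflTransGen_pair iha ihb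
  | enc m k ih => exact (reflTransGen_enc k ih).trans (reflTransGen_pushEnc _ k)

end Msg

open Msg

theorem isNormalForm_pair_iff {A : Type} {a b : Msg A} :
    IsNormalForm (.pair a b) ↔ IsNormalForm a ∧ IsNormalForm b := by
  refine ⟨fun h => ⟨fun _ hx => h _ (.pairL b hx), fun _ hx => h _ (.pairR a hx)⟩, ?_⟩
  rintro ⟨ha, hb⟩ _ hx
  cases hx with
  | pairL _ h => exact ha _ h
  | pairR _ h => exact hb _ h

namespace IsNormalForm

variable {A : Type}

theorem of_enc {m : Msg A} {k : A} (h : IsNormalForm (.enc m k)) : IsNormalForm m :=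
  fun _ hx => h _ (.enc k hx)

theorem pushEnc {m : Msg A} (hm : IsNormalForm m) (k : A) : IsNormalForm (pushEnc m k) := by
  induction m with
  | pair a b iha ihb =>
    obtain ⟨ha, hb⟩ := isNormalForm_pair_iff.mp hm
    exact isNormalForm_pair_iff.mpr ⟨iha ha, ihb hb⟩
  | atom =>
    intro _ hx
    cases hx with
    | enc _ h => cases h
  | enc m k' =>
    intro _ hx
    cases hx with
    | enc _ h => exact hm _ h

theorem normalForm_eq {m : Msg A} (h : IsNormalForm m) : normalForm m = m := by
  induction m with
  | atom => rfl
  | pair a b iha ihb =>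
    obtain ⟨ha, hb⟩ := isNormalForm_pair_iff.mp h
    rw [normalForm, iha ha, ihb hb]
  | enc m k ih =>
    rw [normalForm, ih h.of_enc]
    cases m with
    | pair a b => exact absurd (Rw.homo a b k) (h _)
    | atom | enc => rfl

end IsNormalForm

theorem Msg.isNormalForm_normalForm {A : Type} (m : Msg A) : IsNormalForm (normalForm m) := by
  induction m with
  | atom => rintro _ ⟨⟩
  | pair a b iha ihb => exact isNormalForm_pair_iff.mpr ⟨iha, ihb⟩
  | enc m k ih => exact ih.pushEnc k

theorem Rw.normalForm_eq {A : Type} {m m' : Msg A} (h : Rw m m') : normalForm m = normalForm m' := by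
  induction h with
  | homo => rfl
  | pairL _ _ ih | pairR _ _ ih | enc _ _ ih => simp only [normalForm, ih]

theorem Msg.normalForm_eq_of_reflTransGen {A : Type} {m m' : Msg A}
    (h : ReflTransGen Rw m m') : normalForm m = normalForm m' := by
  induction h with
  | refl => rfl
  | tail _ hstep ih => exact ih.trans hstep.normalForm_eq

theorem homomorphic_rewrite_convergent_general
    (A : Type) (m : Msg A) :
    ∃ n : Msg A,
      (Relation.ReflTransGen Rw m n ∧ IsNormalForm n) ∧
      (∀ n' : Msg A,
        Relation.ReflTransGen Rw m n' → IsNormalForm n' → n' = n) ∧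
      (∀ m' : Msg A,
        Relation.ReflTransGen Rw m m' → Relation.ReflTransGen Rw m' n) := by
  refine ⟨normalForm m, ⟨reflTransGen_normalForm m, isNormalForm_normalForm m⟩, ?_, ?_⟩
  · intro n' hreach hnf
    rw [normalForm_eq_of_reflTransGen hreach, hnf.normalForm_eq]
  · intro m' hreach
    rw [normalForm_eq_of_reflTransGen hreach]
    exact reflTransGen_normalForm m'

/-- Convergence of the homomorphic rewrite system: every message has a unique
normal form, and any two messages reachable from it rewrite to this common
normal form. -/
theorem homomorphic_rewrite_convergent
    (A : Type) [Countable A] (m : Msg A) :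
    ∃ n : Msg A,
      (Relation.ReflTransGen Rw m n ∧ IsNormalForm n) ∧
      (∀ n' : Msg A,
        Relation.ReflTransGen Rw m n' → IsNormalForm n' → n' = n) ∧
      (∀ m' : Msg A,
        Relation.ReflTransGen Rw m m' → Relation.ReflTransGen Rw m' n) :=
  homomorphic_rewrite_convergent_general A m
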